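/- Let x be a message and y ∈ {0,1,←}^n be the sequence of n symbols received when the sender follows the feedback protocol, and suppose at most εn of the symbols in y differ from the symbols the sender actually sent. Then last(x,y) ≥ (1−2ε)n. -/

import Mathlib

/-! Dynamic error correcting code with feedback.
Codeword symbols are `Option Bool`: `some b` is the bit `b`, `none` is the
backspace symbol `←`. -/

/-- `decode` interprets `←` (`none`) as a backspace. -/
def decode (y : List (Option Bool)) : List Bool :=
  y.foldl (fun d s => match s with | some b => d ++ [b] | none => d.dropLast) []

/-- `last(x,y)`: the length of the longest common prefix of `x` and `decode y`,
i.e. the largest `i` with `x[:i] = decode(y)[:i]`. -/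
def lastAgree (x : List Bool) (y : List (Option Bool)) : ℕ :=
  ((x.zip (decode y)).takeWhile (fun p => p.1 == p.2)).length

/-- `suff(x,y) = len(decode y) − last(x,y)`, the length of the wrong suffix. -/
def suff (x : List Bool) (y : List (Option Bool)) : ℕ :=
  (decode y).length - lastAgree x y

/-- The potential `Φ(x,y) = last(x,y) − suff(x,y)` (as an integer). -/
def Phi (x : List Bool) (y : List (Option Bool)) : ℤ :=
  (lastAgree x y : ℤ) - (suff x y : ℤ)

/-- The symbol the sender transmits next: `←` if `suff(x,y) > 0`, and otherwise
the next bit of the message, `x[last(x,y)+1]`. -/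
def nextSym (x : List Bool) (y : List (Option Bool)) : Option Bool :=
  if 0 < suff x y then none else some (x.getD (lastAgree x y) false)

/-- The next symbol is well defined: when `suff = 0` the message is not yet
exhausted. -/
def Sendable (x : List Bool) (y : List (Option Bool)) : Prop :=
  suff x y = 0 → lastAgree x y < x.length

/-! The potential `Phi = last − suff` rises by one with every correctly received symbol and drops
by at most one with any other, so after `n` symbols with at most `εn` errors it is at least
`n − 2εn`; and `last ≥ Phi` because `suff ≥ 0`. Both step bounds are read off the identity
`Phi = 2·lcp(x, decode y) − |decode y|`. -/

section Lcp

variable {α : Type*} [DecidableEq α]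

def lcp : List α → List α → ℕ
  | a :: x, b :: d => if a = b then lcp x d + 1 else 0
  | _, _ => 0

theorem lcp_le_length_right (x d : List α) : lcp x d ≤ d.length := by
  induction x generalizing d with
  | nil => simp [lcp]
  | cons a x ih =>
    cases d with
    | nil => simp [lcp]
    | cons b d => by_cases h : a = b <;> simp [lcp, h, ih]

theorem lcp_dropLast (x d : List α) :
    lcp x d.dropLast = min (lcp x d) (d.length - 1) := by
  induction x generalizing d with
  | nil => simp [lcp]
  | cons a x ih =>
    match d with
    | [] => simp [lcp]
    | [b] => by_cases h : a = b <;> simp [lcp, h]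
    | b :: c :: d => by_cases h : a = b <;> simp [lcp, h, ih]

theorem lcp_le_lcp_append (x d : List α) (b : α) :
    lcp x d ≤ lcp x (d ++ [b]) := by
  induction x generalizing d with
  | nil => simp [lcp]
  | cons a x ih =>
    cases d with
    | nil => simp [lcp]
    | cons c d => by_cases h : a = c <;> simp [lcp, h, ih]

theorem lcp_append_getD_of_lcp_eq_length (x d : List α) (a₀ : α) (h : lcp x d = d.length)
    (hlt : d.length < x.length) : lcp x (d ++ [x.getD d.length a₀]) = d.length + 1 := by
  induction x generalizing d with
  | nil => simp at hlt
  | cons a x ih =>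
    cases d with
    | nil => simp [lcp]
    | cons c d =>
      by_cases hac : a = c
      · simp only [lcp, hac, if_true, List.length_cons] at h hlt
        simp only [List.cons_append, List.length_cons, List.getD_cons_succ, lcp, hac, if_true,
          ih d (by omega) (by omega)]
      · simp [lcp, hac] at h

end Lcp

theorem lastAgree_eq_lcp (x : List Bool) (y : List (Option Bool)) :
    lastAgree x y = lcp x (decode y) := by
  unfold lastAgree
  generalize decode y = d
  induction x generalizing d with
  | nil => cases d <;> simp [lcp]
  | cons a x ih =>
    cases d with
    | nil => simp [lcp]
    | cons b d => by_cases h : a = b <;> simp [lcp, h, ih]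

theorem decode_append_some (y : List (Option Bool)) (b : Bool) :
    decode (y ++ [some b]) = decode y ++ [b] := by
  simp [decode, List.foldl_append]

theorem decode_append_none (y : List (Option Bool)) :
    decode (y ++ [none]) = (decode y).dropLast := by
  simp [decode, List.foldl_append]

theorem Phi_eq_lcp (x : List Bool) (y : List (Option Bool)) :
    Phi x y = 2 * (lcp x (decode y) : ℤ) - (decode y).length := by
  have := lcp_le_length_right x (decode y)
  rw [Phi, suff, lastAgree_eq_lcp]
  omega

theorem Phi_nil (x : List Bool) : Phi x [] = 0 := by
  simp [Phi_eq_lcp, decode, lcp]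

theorem Phi_le_lastAgree (x : List Bool) (y : List (Option Bool)) :
    Phi x y ≤ lastAgree x y := by
  unfold Phi
  omega

theorem Phi_sub_one_le_Phi_append (x : List Bool) (y : List (Option Bool)) (s : Option Bool) :
    Phi x y - 1 ≤ Phi x (y ++ [s]) := by
  have := lcp_le_length_right x (decode y)
  cases s with
  | some b =>
    have := lcp_le_lcp_append x (decode y) b
    simp only [Phi_eq_lcp, decode_append_some, List.length_append, List.length_singleton]
    omega
  | none =>
    simp only [Phi_eq_lcp, decode_append_none, lcp_dropLast, List.length_dropLast]
    omega

theorem Phi_append_nextSym (x : List Bool) (y : List (Option Bool)) (hsend : Sendable x y) :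
    Phi x (y ++ [nextSym x y]) = Phi x y + 1 := by
  unfold Sendable nextSym suff at *
  rw [lastAgree_eq_lcp] at *
  have := lcp_le_length_right x (decode y)
  split_ifs with hwrong
  · simp only [Phi_eq_lcp, decode_append_none, lcp_dropLast, List.length_dropLast]
    omega
  · have hright : lcp x (decode y) = (decode y).length := by omega
    have hnext := lcp_append_getD_of_lcp_eq_length x (decode y) false hright (hright ▸ hsend (by omega))
    simp only [Phi_eq_lcp, decode_append_some, hright, hnext, List.length_append,
      List.length_singleton]
    omega

theorem add_sub_two_mul_length_filter_le {f : ℕ → ℤ} (bad : ℕ → Bool) (n : ℕ)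
    (hdrop : ∀ i < n, f i - 1 ≤ f (i + 1)) (hrise : ∀ i < n, bad i = false → f (i + 1) = f i + 1) :
    f 0 + n - 2 * ((List.range n).filter bad).length ≤ f n := by
  induction n with
  | zero => simp
  | succ n ih =>
    have := ih (fun i hi => hdrop i (by omega)) (fun i hi => hrise i (by omega))
    rw [List.range_succ, List.filter_append, List.length_append, List.filter_singleton]
    cases hn : bad n
    · rw [cond_false, List.length_nil, hrise n (by omega) hn]
      push_cast
      omega
    · rw [cond_true, List.length_singleton]
      push_cast
      linarith [hdrop n (by omega)]

theorem List.take_succ_eq_append_getD {α : Type*} (l : List α) (d : α) {i : ℕ} (hi : i < l.length) :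
    l.take (i + 1) = l.take i ++ [l.getD i d] := by
  rw [List.getD_eq_getElem _ _ hi, List.take_concat_get']

/-- If `y` is the sequence of `n` received symbols when the sender follows the
feedback protocol, and at most `εn` of them differ from the symbols the sender
actually sent, then `last(x,y) ≥ (1−2ε)n`. -/
theorem lastAgree_ge_of_few_errors (x : List Bool) (y : List (Option Bool))
    (n : ℕ) (hn : y.length = n) (ε : ℝ)
    (hsend : ∀ i < n, Sendable x (y.take i))
    (herr : (((List.range n).filter
        (fun i => y.getD i none ≠ nextSym x (y.take i))).length : ℝ) ≤ ε * n) :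
    (1 - 2 * ε) * n ≤ (lastAgree x y : ℝ) := by
  subst hn
  have hPhi := add_sub_two_mul_length_filter_le (f := fun i => Phi x (y.take i))
    (fun i => y.getD i none ≠ nextSym x (y.take i)) y.length
    (fun i hi => by
      rw [List.take_succ_eq_append_getD y none hi]
      exact Phi_sub_one_le_Phi_append x (y.take i) (y.getD i none))
    (fun i hi hright => by
      simp only [decide_eq_false_iff_not, not_not] at hright
      rw [List.take_succ_eq_append_getD y none hi, hright]
      exact Phi_append_nextSym x (y.take i) (hsend i hi))
  simp only [List.take_zero, Phi_nil, List.take_length, zero_add] at hPhi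
  have hlast : (y.length : ℝ) - 2 * ((List.range y.length).filter
      (fun i => y.getD i none ≠ nextSym x (y.take i))).length ≤ lastAgree x y := by
    exact_mod_cast hPhi.trans (Phi_le_lastAgree x y)
  linarith
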